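/- Let H be a contracted minimal Q-triconnected graph with |Q| > 3. Then H is a simple graph (no loops and no parallel edges). -/

import Mathlib

universe u

variable {V : Type u}

/-- A loopless multigraph given by edge multiplicities. -/
structure MGraph (V : Type u) where
  m : Sym2 V → ℕ
  loopless : ∀ v : V, m s(v, v) = 0

/-- Adjacency in a multigraph. -/
def MGraph.Adj (G : MGraph V) (a b : V) : Prop := 0 < G.m s(a, b)

/-- A simple path from `x` to `y`, given as its list of vertices. -/
def MGraph.IsPathL (G : MGraph V) (x y : V) (l : List V) : Prop :=
  l.head? = some x ∧ l.getLast? = some y ∧ l.Nodup ∧ l.Chain' G.Adj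

/-- The path (vertex list) `l` uses the edge `e`. -/
def usesEdge (l : List V) (e : Sym2 V) : Prop :=
  ∃ p ∈ l.zip l.tail, s(p.1, p.2) = e

/-- There are `k` internally vertex-disjoint `x`-`y` paths, respecting edge
multiplicities (parallel edges may be used by distinct paths). -/
def MGraph.ConnKM (G : MGraph V) (k : ℕ) (x y : V) : Prop :=
  ∃ P : Fin k → List V, (∀ i, G.IsPathL x y (P i)) ∧
    (∀ i j, i ≠ j → ∀ v ∈ P i, v ∈ P j → v = x ∨ v = y) ∧
    ∀ e : Sym2 V, Nat.card {i : Fin k // usesEdge (P i) e} ≤ G.m e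

open scoped Classical in
/-- Delete one copy of the edge `e`. -/
noncomputable def MGraph.delE (G : MGraph V) (e : Sym2 V) : MGraph V where
  m f := if f = e then G.m f - 1 else G.m f
  loopless := by intro v; split <;> simp [G.loopless v]

open scoped Classical in
/-- Delete the vertex `v` (remove all edges at `v`). -/
noncomputable def MGraph.delV (G : MGraph V) (v : V) : MGraph V where
  m f := if v ∈ f then 0 else G.m f
  loopless := by intro w; split <;> simp [G.loopless w]

/-- `G` is `Q`-triconnected. -/
def MGraph.QTri (G : MGraph V) (Q : Set V) : Prop :=
  ∀ x ∈ Q, ∀ y ∈ Q, x ≠ y → G.ConnKM 3 x y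

/-- `G` is minimally `Q`-triconnected: deleting any edge or vertex destroys
`Q`-triconnectivity. -/
def MGraph.MinQTri (G : MGraph V) (Q : Set V) : Prop :=
  G.QTri Q ∧ (∀ e : Sym2 V, 0 < G.m e → ¬ (G.delE e).QTri Q) ∧
    ∀ v : V, ¬ (G.delV v).QTri Q

/-- The degree of a vertex, counting multiplicities. -/
noncomputable def MGraph.deg [Fintype V] (G : MGraph V) (v : V) : ℕ :=
  ∑ u : V, G.m s(v, u)

/-!
Suppose an edge `ab` has multiplicity at least two and delete one copy of it. A terminal pair
other than `{a, b}` keeps its three paths, since at most one of them can use `ab`. For the pair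
`{a, b}` itself, every vertex `w ∉ {a, b}` is avoided by some `a`–`b` path without `ab`-edges:
pick a fourth terminal `t ≠ w` and go from `a` to `t` and from `t` to `b` along paths of the
respective triples that avoid `b, w` and `a, w`. The two-path case of Menger's theorem, proved by
Whitney's induction along an `a`–`b` path, then gives two internally disjoint `a`–`b` paths
without `ab`-edges, and the remaining copy of `ab` is the third path; so the deletion keeps the
graph `Q`-triconnected, contradicting minimality.
-/

namespace SimpleGraph

variable {G : SimpleGraph V}

namespace Walk

lemma exists_walk_to_first_mem {S : Set V} {v w : V} (p : G.Walk v w) (hw : w ∈ S) :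
    ∃ z ∈ S, ∃ q : G.Walk v z, q.support ⊆ p.support ∧ ∀ x ∈ q.support, x ∈ S → x = z := by
  induction p with
  | nil => exact ⟨_, hw, nil, by simp, by simp⟩
  | @cons v u w h p ih =>
    by_cases hv : v ∈ S
    · exact ⟨v, hv, nil, by simp, by simp⟩
    obtain ⟨z, hz, q, hqp, hqS⟩ := ih hw
    refine ⟨z, hz, cons h q, ?_, ?_⟩
    · simpa using List.cons_subset_cons v hqp
    · intro x hx hxS
      rw [support_cons, List.mem_cons] at hx
      rcases hx with rfl | hx
      · exact absurd hxS hv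
      · exact hqS x hx hxS

lemma IsPath.start_notMem_support_dropUntil [DecidableEq V] {u v z : V} {p : G.Walk u v}
    (hp : p.IsPath) (hz : z ∈ p.support) (hzu : z ≠ u) : u ∉ (p.dropUntil z hz).support := by
  intro hu
  have hnd := hp.support_nodup
  rw [← p.take_spec hz, support_append, List.nodup_append] at hnd
  rw [← (p.dropUntil z hz).cons_tail_support, List.mem_cons] at hu
  exact hu.elim (fun h => hzu h.symm)
    fun h => hnd.2.2 u (p.takeUntil z hz).start_mem_support u h rfl

end Walk

lemma exists_internallyDisjoint_paths_cons_of_mem {u v z b : V} {X Y : G.Walk u b}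
    (hX : X.IsPath) (hXY : ∀ x ∈ X.support, x ∈ Y.support → x = u ∨ x = b)
    (h : G.Adj v u) {R : G.Walk v z} (hz : z ∈ X.support) (hzu : z ≠ u)
    (hR : ∀ x ∈ R.support, x ∈ X.support ∨ x ∈ Y.support → x = z) :
    ∃ X' Y' : G.Walk v b, X'.IsPath ∧ Y'.IsPath ∧
      ∀ x ∈ X'.support, x ∈ Y'.support → x = v ∨ x = b := by
  classical
  refine ⟨(R.append (X.dropUntil z hz)).bypass, (Walk.cons h Y).bypass, Walk.bypass_isPath _,
    Walk.bypass_isPath _, fun x hx' hy' => ?_⟩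
  replace hx' := Walk.support_bypass_subset_support _ hx'
  replace hy' := Walk.support_bypass_subset_support _ hy'
  rw [Walk.mem_support_append_iff] at hx'
  rw [Walk.support_cons, List.mem_cons] at hy'
  rcases hy' with rfl | hy
  · exact Or.inl rfl
  rcases hx' with hx | hx
  · obtain rfl := hR x hx (Or.inr hy)
    exact Or.inr ((hXY x hz hy).resolve_left hzu)
  · refine (hXY x (X.support_dropUntil_subset_support hz hx) hy).imp (fun hxu => ?_) id
    exact absurd (hxu ▸ hx) (hX.start_notMem_support_dropUntil hz hzu)

lemma exists_internallyDisjoint_paths_cons {u v b : V} {X Y : G.Walk u b}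
    (hX : X.IsPath) (hY : Y.IsPath) (hXY : ∀ x ∈ X.support, x ∈ Y.support → x = u ∨ x = b)
    (h : G.Adj v u) {R : G.Walk v b} (huR : u ∉ R.support) :
    ∃ X' Y' : G.Walk v b, X'.IsPath ∧ Y'.IsPath ∧
      ∀ x ∈ X'.support, x ∈ Y'.support → x = v ∨ x = b := by
  obtain ⟨z, hz, R₁, hR₁R, hR₁⟩ := R.exists_walk_to_first_mem
    (S := {x | x ∈ X.support ∨ x ∈ Y.support}) (Or.inl X.end_mem_support)
  have hzu : z ≠ u := fun hzu => huR (hR₁R (hzu ▸ R₁.end_mem_support))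
  rcases hz with hz | hz
  · exact exists_internallyDisjoint_paths_cons_of_mem hX hXY h hz hzu hR₁
  · obtain ⟨X', Y', hX', hY', hXY'⟩ := exists_internallyDisjoint_paths_cons_of_mem hY
      (fun x hy hx => hXY x hx hy) h hz hzu (fun x hx hxS => hR₁ x hx hxS.symm)
    exact ⟨Y', X', hY', hX', fun x hy hx => hXY' x hx hy⟩

lemma exists_internallyDisjoint_paths_of_isPath {v b : V} {P : G.Walk v b} (hP : P.IsPath)
    (hsep : ∀ w ∈ P.support, w ≠ v → w ≠ b → ∃ R : G.Walk v b, w ∉ R.support) :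
    ∃ X Y : G.Walk v b, X.IsPath ∧ Y.IsPath ∧ ∀ x ∈ X.support, x ∈ Y.support → x = v ∨ x = b := by
  induction P with
  | nil => exact ⟨.nil, .nil, .nil, .nil, by simp⟩
  | @cons v u b h P ih =>
    rw [Walk.cons_isPath_iff] at hP
    by_cases hub : u = b
    · subst hub
      exact ⟨h.toWalk, h.toWalk, h.isPath_toWalk, h.isPath_toWalk, by simp⟩
    obtain ⟨X, Y, hX, hY, hXY⟩ := ih hP.1
      fun w hw hwu hwb => by
        obtain ⟨R, hR⟩ := hsep w (by simp [hw]) (fun hwv => hP.2 (hwv ▸ hw)) hwb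
        exact ⟨Walk.cons h.symm R, by simp [hwu, hR]⟩
    obtain ⟨R, huR⟩ := hsep u (by simp) h.ne.symm hub
    exact exists_internallyDisjoint_paths_cons hX hY hXY h huR

theorem exists_internallyDisjoint_paths {a b : V} (hab : G.Reachable a b)
    (hsep : ∀ w, w ≠ a → w ≠ b → ∃ R : G.Walk a b, w ∉ R.support) :
    ∃ X Y : G.Walk a b, X.IsPath ∧ Y.IsPath ∧ ∀ x ∈ X.support, x ∈ Y.support → x = a ∨ x = b := by
  classical
  exact exists_internallyDisjoint_paths_of_isPath hab.some.bypass_isPath fun w _ => hsep w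

end SimpleGraph

lemma usesEdge_support_iff {G : SimpleGraph V} {x y : V} {p : G.Walk x y} {e : Sym2 V} :
    usesEdge p.support e ↔ e ∈ p.edges := by
  rw [SimpleGraph.Walk.edges_eq_zipWith_support, ← List.map_uncurry_zip_eq_zipWith, List.mem_map]
  rfl

lemma usesEdge.mem {l : List V} {e : Sym2 V} {v : V} (h : usesEdge l e) (hv : v ∈ e) : v ∈ l := by
  obtain ⟨⟨a, b⟩, hab, rfl⟩ := h
  have := List.of_mem_zip hab
  rcases Sym2.mem_iff.mp hv with rfl | rfl
  exacts [this.1, List.mem_of_mem_tail this.2]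

lemma exists_mem_ne_of_three_lt_ncard {Q : Set V} (hQ : 3 < Q.ncard) (a b c : V) :
    ∃ t ∈ Q, t ≠ a ∧ t ≠ b ∧ t ≠ c := by
  have h3 : ({a, b, c} : Set V).ncard ≤ 3 :=
    (Set.ncard_insert_le _ _).trans (Nat.succ_le_succ (by simpa using Set.ncard_insert_le b {c}))
  obtain ⟨t, htQ, ht⟩ := Set.exists_mem_notMem_of_ncard_lt_ncard (h3.trans_lt hQ)
  simp only [Set.mem_insert_iff, Set.mem_singleton_iff, not_or] at ht
  exact ⟨t, htQ, ht⟩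

namespace MGraph

variable {G : MGraph V} {Q : Set V} {x y : V} {l : List V} {e : Sym2 V}

def graph (G : MGraph V) : SimpleGraph V where
  Adj := G.Adj
  symm := ⟨fun u v (h : 0 < G.m s(u, v)) => show 0 < G.m s(v, u) by rwa [Sym2.eq_swap]⟩
  loopless := ⟨fun u (h : 0 < G.m s(u, u)) => by simp [G.loopless] at h⟩

@[simp] lemma graph_adj {u v : V} : G.graph.Adj u v ↔ G.Adj u v := Iff.rfl

lemma isPathL_support {G' : SimpleGraph V} (hle : G' ≤ G.graph) {p : G'.Walk x y}
    (hp : p.IsPath) : G.IsPathL x y p.support :=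
  ⟨by cases p <;> simp, by simp [List.getLast?_eq_some_getLast], hp.support_nodup,
    p.isChain_adj_support.imp fun _ _ h => hle h⟩

lemma exists_walk_support_eq : ∀ {x : V} {l : List V}, l.head? = some x →
    l.getLast? = some y → l.IsChain G.Adj → ∃ p : G.graph.Walk x y, p.support = l
  | _, [], hx, _, _ => by simp at hx
  | _, [_], hx, hy, _ => by
    simp only [List.head?_cons, List.getLast?_singleton, Option.some.injEq] at hx hy
    subst hx hy
    exact ⟨.nil, rfl⟩
  | _, a :: c :: t, hx, hy, hc => by
    simp only [List.head?_cons, Option.some.injEq] at hx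
    subst hx
    rw [List.isChain_cons_cons] at hc
    obtain ⟨p, hp⟩ := exists_walk_support_eq (x := c) rfl (by simpa using hy) hc.2
    exact ⟨.cons (graph_adj.mpr hc.1) p, by simp [hp]⟩

lemma IsPathL.exists_walk (h : G.IsPathL x y l) : ∃ p : G.graph.Walk x y, p.support = l :=
  exists_walk_support_eq h.1 h.2.1 h.2.2.2

lemma IsPathL.pos_of_usesEdge (h : G.IsPathL x y l) (he : usesEdge l e) : 0 < G.m e := by
  obtain ⟨p, rfl⟩ := h.exists_walk
  induction e using Sym2.ind
  exact graph_adj.mp (p.adj_of_mem_edges (usesEdge_support_iff.mp he))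

lemma IsPathL.mono {G' : MGraph V} (hle : G.graph ≤ G'.graph) (h : G.IsPathL x y l) :
    G'.IsPathL x y l :=
  ⟨h.1, h.2.1, h.2.2.1, h.2.2.2.imp fun _ _ h => hle h⟩

lemma graph_le_graph_delE (hm : 2 ≤ G.m e) : G.graph ≤ (G.delE e).graph := by
  intro u v (h : 0 < G.m s(u, v))
  show 0 < (G.delE e).m s(u, v)
  simp only [delE]
  split_ifs with he
  · subst he
    omega
  · exact h

lemma deleteEdges_le_graph_delE : G.graph.deleteEdges {e} ≤ (G.delE e).graph := by
  intro u v h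
  rw [SimpleGraph.deleteEdges_adj, Set.mem_singleton_iff] at h
  show 0 < (G.delE e).m s(u, v)
  simp only [delE, if_neg h.2]
  exact h.1

lemma ConnKM.exists_isPathL_avoiding (h : G.ConnKM 3 x y) {u w : V} (hux : u ≠ x) (huy : u ≠ y)
    (hwx : w ≠ x) (hwy : w ≠ y) : ∃ l, G.IsPathL x y l ∧ u ∉ l ∧ w ∉ l := by
  classical
  obtain ⟨P, hP, hdisj, -⟩ := h
  have hunique : ∀ {v}, v ≠ x → v ≠ y → ∀ i j, v ∈ P i → v ∈ P j → i = j := by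
    intro v hvx hvy i j hi hj
    by_contra hij
    exact (hdisj i j hij v hi hj).elim hvx hvy
  -- two of the three paths agree on whether they contain `u`, so neither does
  obtain ⟨i, j, hij, hu⟩ :=
    Fintype.exists_ne_map_eq_of_card_lt (fun i => decide (u ∈ P i)) (by simp)
  simp only [decide_eq_decide] at hu
  have hui : u ∉ P i := fun hui => hij (hunique hux huy i j hui (hu.mp hui))
  by_cases hwi : w ∈ P i
  · exact ⟨P j, hP j, fun huj => hui (hu.mpr huj), fun hwj => hij (hunique hwx hwy i j hwi hwj)⟩
  · exact ⟨P i, hP i, hui, hwi⟩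

lemma natCard_usesEdge_le_one {k : ℕ} {P : Fin k → List V} (hP : ∀ i, G.IsPathL x y (P i))
    (hdisj : ∀ i j, i ≠ j → ∀ v ∈ P i, v ∈ P j → v = x ∨ v = y) (he : e ≠ s(x, y)) :
    Nat.card {i // usesEdge (P i) e} ≤ 1 := by
  refine Finite.card_le_one_iff_subsingleton.mpr ⟨fun ⟨i, hi⟩ ⟨j, hj⟩ => Subtype.ext ?_⟩
  by_contra hij
  induction e using Sym2.ind with | _ a b => ?_
  have hab : a ≠ b := by
    rintro rfl
    simpa [G.loopless] using (hP i).pos_of_usesEdge hi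
  have ha := hdisj i j hij a (hi.mem (Sym2.mem_mk_left a b)) (hj.mem (Sym2.mem_mk_left a b))
  have hb := hdisj i j hij b (hi.mem (Sym2.mem_mk_right a b)) (hj.mem (Sym2.mem_mk_right a b))
  rcases ha with rfl | rfl <;> rcases hb with rfl | rfl
  exacts [hab rfl, he rfl, he Sym2.eq_swap, hab rfl]

lemma ConnKM.delE {k : ℕ} (h : G.ConnKM k x y) (he : e ≠ s(x, y)) (hm : 2 ≤ G.m e) :
    (G.delE e).ConnKM k x y := by
  obtain ⟨P, hP, hdisj, hcard⟩ := h
  refine ⟨P, fun i => (hP i).mono (graph_le_graph_delE hm), hdisj, fun f => ?_⟩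
  by_cases hf : f = e
  · subst hf
    have := natCard_usesEdge_le_one hP hdisj he
    simp only [MGraph.delE, ↓reduceIte]
    omega
  · simpa only [MGraph.delE, if_neg hf] using hcard f

lemma connKM_three_of_internallyDisjoint {G' : SimpleGraph V} (hle : G' ≤ G.graph)
    (hxy' : ¬ G'.Adj x y) (hxy : G.Adj x y) {X Y : G'.Walk x y} (hX : X.IsPath) (hY : Y.IsPath)
    (hXY : ∀ v ∈ X.support, v ∈ Y.support → v = x ∨ v = y) : G.ConnKM 3 x y := by
  set P : Fin 3 → List V := ![[x, y], X.support, Y.support]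
  have hP : ∀ i, G.IsPathL x y (P i) := by
    intro i
    fin_cases i
    · exact isPathL_support le_rfl (graph_adj.mpr hxy).isPath_toWalk
    · exact isPathL_support hle hX
    · exact isPathL_support hle hY
  have hdisj : ∀ i j, i ≠ j → ∀ v ∈ P i, v ∈ P j → v = x ∨ v = y := by
    have hedge : ∀ v ∈ [x, y], v = x ∨ v = y := by simp
    intro i j hij v hi hj
    fin_cases i <;> fin_cases j <;>
      first
      | exact absurd rfl hij
      | exact hedge v hi
      | exact hedge v hj
      | exact hXY v hi hj
      | exact hXY v hj hi
  refine ⟨P, hP, hdisj, fun e => ?_⟩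
  by_cases he : e = s(x, y)
  · subst he
    have hdirect : ∀ i, usesEdge (P i) s(x, y) → i = 0 := by
      intro i hi
      fin_cases i
      · rfl
      · exact absurd (X.adj_of_mem_edges (usesEdge_support_iff.mp hi)) hxy'
      · exact absurd (Y.adj_of_mem_edges (usesEdge_support_iff.mp hi)) hxy'
    refine (Finite.card_le_one_iff_subsingleton.mpr ⟨fun i j => ?_⟩).trans hxy
    exact Subtype.ext ((hdirect _ i.2).trans (hdirect _ j.2).symm)
  · rcases isEmpty_or_nonempty {i // usesEdge (P i) e} with hnone | ⟨⟨i, hi⟩⟩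
    · simp
    · exact (natCard_usesEdge_le_one hP hdisj he).trans ((hP i).pos_of_usesEdge hi)

lemma QTri.exists_walk_deleteEdges_avoiding (hQ : G.QTri Q) (hQ4 : 3 < Q.ncard) (hx : x ∈ Q)
    (hy : y ∈ Q) (hxy : x ≠ y) {w : V} (hwx : w ≠ x) (hwy : w ≠ y) :
    ∃ R : (G.graph.deleteEdges {s(x, y)}).Walk x y, w ∉ R.support := by
  obtain ⟨t, htQ, htx, hty, htw⟩ := exists_mem_ne_of_three_lt_ncard hQ4 x y w
  obtain ⟨l₁, hl₁, hyl₁, hwl₁⟩ := (hQ x hx t htQ (Ne.symm htx)).exists_isPathL_avoiding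
    (Ne.symm hxy) (Ne.symm hty) hwx (Ne.symm htw)
  obtain ⟨l₂, hl₂, hxl₂, hwl₂⟩ := (hQ t htQ y hy hty).exists_isPathL_avoiding
    (Ne.symm htx) hxy (Ne.symm htw) hwy
  obtain ⟨p₁, rfl⟩ := hl₁.exists_walk
  obtain ⟨p₂, rfl⟩ := hl₂.exists_walk
  have hp : s(x, y) ∉ (p₁.append p₂).edges := by
    rw [SimpleGraph.Walk.edges_append, List.mem_append]
    rintro (h | h)
    exacts [hyl₁ (p₁.snd_mem_support_of_mem_edges h), hxl₂ (p₂.fst_mem_support_of_mem_edges h)]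
  refine ⟨(p₁.append p₂).toDeleteEdge _ hp, ?_⟩
  simp [SimpleGraph.Walk.support_transfer, SimpleGraph.Walk.mem_support_append_iff, hwl₁, hwl₂]

lemma QTri.connKM_delE (hQ : G.QTri Q) (hQ4 : 3 < Q.ncard) (hx : x ∈ Q) (hy : y ∈ Q)
    (hxy : x ≠ y) (hm : 2 ≤ G.m s(x, y)) : (G.delE s(x, y)).ConnKM 3 x y := by
  obtain ⟨t, -, htx, hty, -⟩ := exists_mem_ne_of_three_lt_ncard hQ4 x y x
  obtain ⟨R, -⟩ := hQ.exists_walk_deleteEdges_avoiding hQ4 hx hy hxy htx hty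
  obtain ⟨X, Y, hX, hY, hXY⟩ := SimpleGraph.exists_internallyDisjoint_paths ⟨R⟩
    fun w hwx hwy => hQ.exists_walk_deleteEdges_avoiding hQ4 hx hy hxy hwx hwy
  refine connKM_three_of_internallyDisjoint deleteEdges_le_graph_delE (by simp) ?_ hX hY hXY
  show 0 < (G.delE s(x, y)).m s(x, y)
  simp only [delE, ↓reduceIte]
  omega

end MGraph

theorem stmt_5_general (H : MGraph V) (Q : Set V)
    (hmin : H.MinQTri Q)
    (hQ : 3 < Q.ncard) :
    ∀ e : Sym2 V, H.m e ≤ 1 := by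
  intro e
  by_contra! he
  refine hmin.2.1 e (by omega) fun x hx y hy hxy => ?_
  by_cases hexy : e = s(x, y)
  · subst hexy
    exact hmin.1.connKM_delE hQ hx hy hxy he
  · exact (hmin.1 x hx y hy hxy).delE hexy he

/-- A contracted minimal `Q`-triconnected multigraph with more than
three terminals is simple: every edge has multiplicity at most one (and there
are no loops). -/
theorem stmt_5 [Fintype V] (H : MGraph V) (Q : Set V)
    (hmin : H.MinQTri Q) (hcontracted : ∀ v : V, H.deg v ≠ 2)
    (hQ : 3 < Q.ncard) :
    ∀ e : Sym2 V, H.m e ≤ 1 :=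
  stmt_5_general H Q hmin hQ
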